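/- Let H be a Hopf k-algebra, (M, Δ_M) a right H-comodule, and (B, θ_B) a left H-contramodule. Then the map θ_diag : Hom_k(H, Hom_k(M,B)) → Hom_k(M,B) defined by θ_diag(Φ)(m) = θ_B(h ↦ Φ(m₍₁₎h)(m₍₀₎)) makes (Hom_k(M,B), θ_diag) a left H-contramodule (the diagonal contra-action). -/

import Mathlib

/-!
STATEMENT 6: Let H be a Hopf k-algebra, (M, Δ_M) a right H-comodule, and (B, θ_B) a left
H-contramodule. Then θ_diag(Φ)(m) = θ_B(h ↦ Φ(m₍₁₎h)(m₍₀₎)) makes (Hom_k(M,B), θ_diag)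
a left H-contramodule (the diagonal contra-action).
-/

open TensorProduct LinearMap

noncomputable section

def IsContramodule (k : Type*) [Field k]
    (C : Type*) [AddCommMonoid C] [Module k C] [Coalgebra k C]
    {B : Type*} [AddCommGroup B] [Module k B]
    (θ : (C →ₗ[k] B) →ₗ[k] B) : Prop :=
  (∀ Φ : C →ₗ[k] (C →ₗ[k] B),
      θ (θ ∘ₗ Φ) = θ ((TensorProduct.lift Φ.flip) ∘ₗ Coalgebra.comul)) ∧
  (∀ b : B, θ ((LinearMap.toSpanSingleton k B b) ∘ₗ Coalgebra.counit) = b)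

def IsComodule (k : Type*) [Field k]
    (C : Type*) [AddCommMonoid C] [Module k C] [Coalgebra k C]
    {M : Type*} [AddCommGroup M] [Module k M]
    (ρ : M →ₗ[k] M ⊗[k] C) : Prop :=
  ((TensorProduct.assoc k M C C).toLinearMap ∘ₗ (TensorProduct.map ρ LinearMap.id) ∘ₗ ρ
      = (TensorProduct.map LinearMap.id Coalgebra.comul) ∘ₗ ρ) ∧
  ((TensorProduct.rid k M).toLinearMap ∘ₗ
      (TensorProduct.map LinearMap.id Coalgebra.counit) ∘ₗ ρ = LinearMap.id)

/-- The diagonal contra-action on `Hom_k(M,B)`: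
`θ_diag(Φ)(m) = θ_B(h ↦ Φ(m₍₁₎h)(m₍₀₎))`, bundled as a linear map in `Φ`. -/
def diagContra (k : Type*) [Field k]
    (H : Type*) [Semiring H] [HopfAlgebra k H]
    {M : Type*} [AddCommGroup M] [Module k M]
    {B : Type*} [AddCommGroup B] [Module k B]
    (ρ : M →ₗ[k] M ⊗[k] H) (θB : (H →ₗ[k] B) →ₗ[k] B) :
    (H →ₗ[k] (M →ₗ[k] B)) →ₗ[k] (M →ₗ[k] B) :=
  (LinearMap.llcomp k M (H →ₗ[k] B) B θB) ∘ₗ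
  (LinearMap.lcomp k (H →ₗ[k] B) ρ) ∘ₗ
  (TensorProduct.uncurry (RingHom.id k) M H (H →ₗ[k] B)) ∘ₗ
  (LinearMap.lflip : (H →ₗ[k] (M →ₗ[k] (H →ₗ[k] B))) ≃ₗ[k] (M →ₗ[k] (H →ₗ[k] (H →ₗ[k] B)))).toLinearMap ∘ₗ
  (LinearMap.llcomp k H (H →ₗ[k] (M →ₗ[k] B)) (M →ₗ[k] (H →ₗ[k] B)) (LinearMap.lflip : (H →ₗ[k] (M →ₗ[k] B)) ≃ₗ[k] (M →ₗ[k] (H →ₗ[k] B))).toLinearMap) ∘ₗ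
  (TensorProduct.lcurry (RingHom.id k) H H (M →ₗ[k] B)) ∘ₗ
  (LinearMap.lcomp k (M →ₗ[k] B) (LinearMap.mul' k H))

/-! Write `θ_diag Φ m = θ_B (D_Φ (ρ m))` with `D_Φ (m ⊗ a) = (h ↦ Φ (a h) m)`. Because `Δ` and `ε`
are algebra maps, `D_{Ψ ∘ f} = D_Ψ ((id ⊗ f) -) ∘ f` for `f = Δ, ε`. Contra-associativity of
`θ_diag` is then contra-associativity of `θ_B` followed by coassociativity of `ρ`, and contra-unity
of `θ_diag` is contra-unity of `θ_B` followed by the counit law of `ρ`. -/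

section DiagIntegrand

variable {k A M B : Type*} [CommSemiring k] [Semiring A] [Algebra k A]
  [AddCommMonoid M] [Module k M] [AddCommMonoid B] [Module k B]

def diagIntegrand (Φ : A →ₗ[k] M →ₗ[k] B) : M ⊗[k] A →ₗ[k] A →ₗ[k] B :=
  TensorProduct.lift (LinearMap.lflip.toLinearMap ∘ₗ (LinearMap.mul k A).compr₂ Φ).flip

@[simp]
lemma diagIntegrand_tmul_apply (Φ : A →ₗ[k] M →ₗ[k] B) (m : M) (a h : A) :
    diagIntegrand Φ (m ⊗ₜ a) h = Φ (a * h) m :=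
  rfl

lemma diagIntegrand_comp_algHom {A' : Type*} [Semiring A'] [Algebra k A']
    (Ψ : A' →ₗ[k] M →ₗ[k] B) (f : A →ₐ[k] A') (u : M ⊗[k] A) :
    diagIntegrand (Ψ ∘ₗ f.toLinearMap) u
      = diagIntegrand Ψ (TensorProduct.map LinearMap.id f.toLinearMap u) ∘ₗ f.toLinearMap := by
  induction u using TensorProduct.induction_on with
  | zero => simp
  | tmul m a => ext h; simp
  | add u v hu hv => simp [hu, hv, LinearMap.add_comp]

lemma diagIntegrand_toSpanSingleton (f : M →ₗ[k] B) (u : M ⊗[k] k) :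
    diagIntegrand (LinearMap.toSpanSingleton k (M →ₗ[k] B) f) u
      = LinearMap.toSpanSingleton k B (f (TensorProduct.rid k M u)) := by
  induction u using TensorProduct.induction_on with
  | zero => simp
  | tmul m c => ext; simp
  | add u v hu hv => simp [hu, hv, LinearMap.toSpanSingleton_add]

lemma diagIntegrand_lift_flip_assoc_tmul (Φ : A →ₗ[k] A →ₗ[k] M →ₗ[k] B) (u : M ⊗[k] A)
    (a g h : A) :
    diagIntegrand (TensorProduct.lift Φ.flip) (TensorProduct.assoc k M A A (u ⊗ₜ a)) (g ⊗ₜ h)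
      = diagIntegrand (Φ (a * h)) u g := by
  induction u using TensorProduct.induction_on with
  | zero => simp
  | tmul m b => simp [Algebra.TensorProduct.tmul_mul_tmul]
  | add u v hu hv => simp [TensorProduct.add_tmul, hu, hv]

end DiagIntegrand

namespace IsComodule

variable {k C M : Type*} [Field k] [AddCommMonoid C] [Module k C] [Coalgebra k C]
  [AddCommGroup M] [Module k M] {ρ : M →ₗ[k] M ⊗[k] C}

lemma assoc_map_apply (hM : IsComodule k C ρ) (m : M) :
    TensorProduct.assoc k M C C (TensorProduct.map ρ LinearMap.id (ρ m))
      = TensorProduct.map LinearMap.id Coalgebra.comul (ρ m) :=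
  LinearMap.congr_fun hM.1 m

lemma rid_map_counit_apply (hM : IsComodule k C ρ) (m : M) :
    TensorProduct.rid k M (TensorProduct.map LinearMap.id Coalgebra.counit (ρ m)) = m :=
  LinearMap.congr_fun hM.2 m

end IsComodule

section DiagContra

variable {k H M B : Type*} [Field k] [Semiring H] [HopfAlgebra k H]
  [AddCommGroup M] [Module k M] [AddCommGroup B] [Module k B]
  (ρ : M →ₗ[k] M ⊗[k] H) (θB : (H →ₗ[k] B) →ₗ[k] B)

lemma diagContra_apply (Φ : H →ₗ[k] M →ₗ[k] B) (m : M) :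
    diagContra k H ρ θB Φ m = θB (diagIntegrand Φ (ρ m)) :=
  rfl

lemma diagIntegrand_diagContra_comp (Φ : H →ₗ[k] H →ₗ[k] M →ₗ[k] B) (t : M ⊗[k] H) :
    diagIntegrand (diagContra k H ρ θB ∘ₗ Φ) t
      = θB ∘ₗ (TensorProduct.curry (diagIntegrand (TensorProduct.lift Φ.flip)
          (TensorProduct.assoc k M H H (TensorProduct.map ρ LinearMap.id t)))).flip := by
  induction t using TensorProduct.induction_on with
  | zero =>
    ext h
    simp only [map_zero, LinearMap.zero_apply, LinearMap.comp_apply]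
    exact (map_zero θB).symm
  | tmul m a =>
    ext h
    simp only [diagIntegrand_tmul_apply, LinearMap.comp_apply, diagContra_apply,
      TensorProduct.map_tmul, LinearMap.id_apply]
    congr 1
    ext g
    simp [diagIntegrand_lift_flip_assoc_tmul]
  | add u v hu hv =>
    ext h
    simp only [map_add, LinearMap.add_apply, hu, hv, LinearMap.comp_apply]
    exact (map_add θB _ _).symm

end DiagContra

theorem diagContra_isContramodule
    (k : Type*) [Field k]
    (H : Type*) [Semiring H] [HopfAlgebra k H]
    (M : Type*) [AddCommGroup M] [Module k M]
    (B : Type*) [AddCommGroup B] [Module k B]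
    (ρ : M →ₗ[k] M ⊗[k] H) (hM : IsComodule k H ρ)
    (θB : (H →ₗ[k] B) →ₗ[k] B) (hB : IsContramodule k H θB) :
    IsContramodule k H (diagContra k H ρ θB) := by
  constructor
  · intro Φ
    ext m
    set G := diagIntegrand (TensorProduct.lift Φ.flip)
      (TensorProduct.assoc k M H H (TensorProduct.map ρ LinearMap.id (ρ m))) with hGdef
    have hG : TensorProduct.lift (TensorProduct.curry G).flip.flip = G :=
      TensorProduct.ext' fun _ _ => rfl
    calc diagContra k H ρ θB (diagContra k H ρ θB ∘ₗ Φ) m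
        = θB (θB ∘ₗ (TensorProduct.curry G).flip) := by
          rw [diagContra_apply, diagIntegrand_diagContra_comp]
      _ = θB (G ∘ₗ Coalgebra.comul) := by rw [hB.1, hG]
      _ = θB (diagIntegrand (TensorProduct.lift Φ.flip)
            (TensorProduct.map LinearMap.id Coalgebra.comul (ρ m)) ∘ₗ Coalgebra.comul) := by
          rw [hGdef, hM.assoc_map_apply]
      _ = diagContra k H ρ θB (TensorProduct.lift Φ.flip ∘ₗ Coalgebra.comul) m := by
          rw [diagContra_apply, ← Bialgebra.toLinearMap_comulAlgHom, diagIntegrand_comp_algHom]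
  · intro f
    ext m
    rw [diagContra_apply, ← Bialgebra.toLinearMap_counitAlgHom, diagIntegrand_comp_algHom,
      diagIntegrand_toSpanSingleton, Bialgebra.toLinearMap_counitAlgHom, hB.2, hM.rid_map_counit_apply]
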